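/- arXiv:2507.11375 — 2 statements merged into one kernel-verified Lean document; each statement's English description precedes it below -/
import Mathlib

section
/- Separation of empirical atoms: if (z^j)_{j ∈ J} are points in a metric space that are pairwise at distance at least 1/k, and μ_p = (1/#Q) Σ_{q ∈ Q} δ_{z^{Φ(q,p)}} for a map Φ : Q × P → J satisfying that for p ≠ p' the number of pairs (q,q') with Φ(q,p) = Φ(q',p') is less than (3/4)#Q, then d_KW(μ_p, μ_{p'}) ≥ 1/(4k) for all p ≠ p'. -/
/-!
A coupling `π` of `μ_p` and `μ_{p'}` lives on the finite grid `{(z^i, z^j)}`, so its cost is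
`∑ π{(z^i, z^j)} d(z^i, z^j) ≥ (1/k) (1 - ∑_j π{(z^j, z^j)})`. A diagonal atom is bounded by both
marginals, `π{(z^j, z^j)} ≤ min(a_j, b_j)/#Q` with `a_j = #{q | Φ(q,p) = j}` and
`b_j = #{q | Φ(q,p') = j}`, and `∑_j min(a_j, b_j) ≤ ∑_j a_j b_j`, which is the number of pairs
`(q, q')` with `Φ(q,p) = Φ(q',p')`, less than `(3/4)#Q`. So at least mass `1/4` moves a distance
at least `1/k`.
-/

open scoped Classical

open MeasureTheory ENNReal Finset

/-- The Kantorovich–Wasserstein distance associated to a cost `d`. -/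
noncomputable def kwDist {Y : Type*} [MeasurableSpace Y] (d : Y → Y → ℝ)
    (μ ν : Measure Y) : ℝ :=
  sInf {c : ℝ | ∃ π : Measure (Y × Y),
    π.map Prod.fst = μ ∧ π.map Prod.snd = ν ∧ c = ∫ p, d p.1 p.2 ∂π}

theorem le_kwDist {Y : Type*} [MeasurableSpace Y] {d : Y → Y → ℝ} {μ ν : Measure Y}
    [IsProbabilityMeasure μ] [IsProbabilityMeasure ν] {c : ℝ}
    (h : ∀ π : Measure (Y × Y), π.map Prod.fst = μ → π.map Prod.snd = ν →
      c ≤ ∫ p, d p.1 p.2 ∂π) :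
    c ≤ kwDist d μ ν :=
  le_csInf ⟨_, μ.prod ν, by simp, by simp, rfl⟩ fun _ ⟨π, h₁, h₂, hc⟩ => hc ▸ h π h₁ h₂

section Coupling

variable {α β : Type*} [MeasurableSpace α] [MeasurableSpace β] {π : Measure (α × β)}
  {μ : Measure α} {ν : Measure β} {s : Set α} {t : Set β}

lemma measureReal_prod_le_min [IsFiniteMeasure π]
    (h₁ : π.map Prod.fst = μ) (h₂ : π.map Prod.snd = ν) (hs : MeasurableSet s)
    (ht : MeasurableSet t) : π.real (s ×ˢ t) ≤ min (μ.real s) (ν.real t) := by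
  rw [← h₁, ← h₂, map_measureReal_apply measurable_fst hs,
    map_measureReal_apply measurable_snd ht]
  exact le_min (measureReal_mono fun _ hx => hx.1) (measureReal_mono fun _ hx => hx.2)

lemma measure_compl_prod_eq_zero (h₁ : π.map Prod.fst = μ) (h₂ : π.map Prod.snd = ν)
    (hs : MeasurableSet s) (ht : MeasurableSet t) (hμ : μ sᶜ = 0) (hν : ν tᶜ = 0) :
    π (s ×ˢ t)ᶜ = 0 := by
  rw [Set.compl_prod_eq_union]
  refine measure_union_null ?_ ?_
  · rwa [Set.prod_univ, ← Measure.map_apply measurable_fst hs.compl, h₁]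
  · rwa [Set.univ_prod, ← Measure.map_apply measurable_snd ht.compl, h₂]

end Coupling

theorem integral_eq_sum_of_measure_compl_range_eq_zero {α E ι : Type*} [MeasurableSpace α]
    [MeasurableSingletonClass α] [NormedAddCommGroup E] [NormedSpace ℝ E] [CompleteSpace E]
    [Fintype ι] {g : ι → α} (hg : Function.Injective g) {μ : Measure α} [IsFiniteMeasure μ]
    (hμ : μ (Set.range g)ᶜ = 0) (f : α → E) :
    ∫ x, f x ∂μ = ∑ i, μ.real {g i} • f (g i) := by
  have hint : IntegrableOn f (Set.range g) μ := by
    rw [← Set.iUnion_singleton_eq_range, integrableOn_finite_iUnion]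
    exact fun i => integrableOn_singleton
  have hae : ∀ᵐ x ∂μ, x ∈ Set.range g := by
    simpa using measure_eq_zero_iff_ae_notMem.mp hμ
  rw [← Fintype.coe_image_univ] at hint hae
  rw [← Measure.restrict_eq_self_of_ae_mem hae, setIntegral_finset _ hint,
    sum_image fun i _ j _ h => hg h, Measure.restrict_eq_self_of_ae_mem hae]

section Separated

variable {X ι : Type*} {z : ι → X} {δ : ℝ}

theorem injective_of_separated [PseudoMetricSpace X] (hδ : 0 < δ)
    (hsep : ∀ i j, i ≠ j → δ ≤ dist (z i) (z j)) : Function.Injective z :=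
  fun i j hij => by_contra fun hne => (hsep i j hne).not_gt (by rwa [hij, dist_self])

theorem mul_one_sub_sum_diag_le_integral_dist [MetricSpace X] [MeasurableSpace X]
    [MeasurableSingletonClass X] [Fintype ι] (hδ : 0 < δ)
    (hsep : ∀ i j, i ≠ j → δ ≤ dist (z i) (z j)) {π : Measure (X × X)}
    [IsProbabilityMeasure π] (hπ : π (Set.range (Prod.map z z))ᶜ = 0) :
    δ * (1 - ∑ i, π.real {(z i, z i)}) ≤ ∫ x, dist x.1 x.2 ∂π := by
  have hz := injective_of_separated hδ hsep
  have hzz := hz.prodMap hz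
  have htotal : ∑ i, ∑ j, π.real {(z i, z j)} = 1 := by
    simpa [Fintype.sum_prod_type] using
      (integral_eq_sum_of_measure_compl_range_eq_zero hzz hπ fun _ => (1 : ℝ)).symm
  rw [integral_eq_sum_of_measure_compl_range_eq_zero hzz hπ, Fintype.sum_prod_type]
  calc δ * (1 - ∑ i, π.real {(z i, z i)})
      = ∑ i, ∑ j, π.real {(z i, z j)} * (δ - if i = j then δ else 0) := by
        simp only [mul_sub, sum_sub_distrib, mul_ite, mul_zero, sum_ite_eq, mem_univ, if_true,
          ← sum_mul, htotal]
        ring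
    _ ≤ ∑ i, ∑ j, π.real {Prod.map z z (i, j)} • dist (z i) (z j) := by
        refine sum_le_sum fun i _ => sum_le_sum fun j _ =>
          mul_le_mul_of_nonneg_left ?_ measureReal_nonneg
        split_ifs with h
        · simp [h]
        · simpa using hsep _ _ h

end Separated

section EmpiricalMeasure

variable {Q X : Type*} [Fintype Q] [MeasurableSpace X]

noncomputable def empiricalMeasure (w : Q → X) : Measure X :=
  (Fintype.card Q : ℝ≥0∞)⁻¹ • ∑ q, Measure.dirac (w q)

variable [MeasurableSingletonClass X] (w : Q → X)

lemma empiricalMeasure_apply (s : Set X) :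
    empiricalMeasure w s = #{q | w q ∈ s} / Fintype.card Q := by
  simp [empiricalMeasure, Measure.dirac_apply, Set.indicator_apply, sum_boole,
    ENNReal.div_eq_inv_mul]

instance [Nonempty Q] : IsProbabilityMeasure (empiricalMeasure w) :=
  ⟨by simp [empiricalMeasure_apply, ENNReal.div_self]⟩

lemma empiricalMeasure_compl_range : empiricalMeasure w (Set.range w)ᶜ = 0 := by
  simp [empiricalMeasure_apply]

lemma empiricalMeasure_real_singleton (x : X) :
    (empiricalMeasure w).real {x} = #{q | w q = x} / Fintype.card Q := by
  simp [measureReal_def, empiricalMeasure_apply, ENNReal.toReal_div]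

end EmpiricalMeasure

theorem sum_min_card_fiber_le_card {Q J : Type*} [Fintype Q] [Fintype J] (f g : Q → J) :
    ∑ j, min #{q | f q = j} #{q | g q = j} ≤ #{qq : Q × Q | f qq.1 = g qq.2} := by
  calc ∑ j, min #{q | f q = j} #{q | g q = j}
      ≤ ∑ j, #{q | f q = j} * #{q | g q = j} := by
        refine sum_le_sum fun j _ => ?_
        rcases Nat.eq_zero_or_pos #{q | g q = j} with h | h
        · simp [h]
        · exact (min_le_left _ _).trans (Nat.le_mul_of_pos_right _ h)
    _ = #{qq : Q × Q | f qq.1 = g qq.2} := by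
        rw [card_eq_sum_card_fiberwise (f := fun qq : Q × Q => f qq.1) fun _ _ => mem_univ _]
        refine sum_congr rfl fun j _ => ?_
        rw [filter_filter, ← card_product]
        congr 1
        ext qq
        simp only [mem_filter, mem_univ, true_and, mem_product]
        constructor
        · rintro ⟨h₁, h₂⟩; exact ⟨h₁.trans h₂.symm, h₁⟩
        · rintro ⟨h, rfl⟩; exact ⟨rfl, h.symm⟩

theorem separated_empirical_measures_general {X : Type*} [MetricSpace X] [MeasurableSpace X]
    [BorelSpace X] {J Q P : Type*} [Fintype J] [Fintype Q]
    (k : ℝ) (hk : 0 < k) (z : J → X)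
    (hsep : ∀ i j : J, i ≠ j → 1 / k ≤ dist (z i) (z j))
    (Φ : Q × P → J)
    (hΦ : ∀ p p' : P, p ≠ p' →
      4 * (Finset.univ.filter (fun qq' : Q × Q => Φ (qq'.1, p) = Φ (qq'.2, p'))).card
        < 3 * Fintype.card Q)
    (μ : P → Measure X)
    (hμ : ∀ p, μ p = ((Fintype.card Q : ℝ≥0∞))⁻¹ • ∑ q : Q, Measure.dirac (z (Φ (q, p)))) :
    ∀ p p' : P, p ≠ p' → 1 / (4 * k) ≤ kwDist dist (μ p) (μ p') := by
  intro p p' hpp'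
  have hpairs := hΦ p p' hpp'
  have hN : (0 : ℝ) < Fintype.card Q := by exact_mod_cast (by omega : 0 < Fintype.card Q)
  have : Nonempty Q := Fintype.card_pos_iff.mp (by exact_mod_cast hN)
  obtain rfl : μ = fun r => empiricalMeasure fun q => z (Φ (q, r)) := funext hμ
  have hz := injective_of_separated (one_div_pos.mpr hk) hsep
  have hmass (r : P) (j : J) : (empiricalMeasure fun q => z (Φ (q, r))).real {z j} =
      #{q | Φ (q, r) = j} / Fintype.card Q := by
    simp [empiricalMeasure_real_singleton, hz.eq_iff]
  have hsupp (r : P) : empiricalMeasure (fun q => z (Φ (q, r))) (Set.range z)ᶜ = 0 :=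
    measure_mono_null (Set.compl_subset_compl.mpr (Set.range_comp_subset_range _ z))
      (empiricalMeasure_compl_range _)
  refine le_kwDist fun π h₁ h₂ => ?_
  have : IsProbabilityMeasure (π.map Prod.fst) := h₁ ▸ inferInstance
  have : IsProbabilityMeasure π := Measure.isProbabilityMeasure_of_map Prod.fst
  have hπ : π (Set.range (Prod.map z z))ᶜ = 0 := by
    rw [Set.range_prodMap]
    exact measure_compl_prod_eq_zero h₁ h₂ (Set.finite_range z).measurableSet
      (Set.finite_range z).measurableSet (hsupp p) (hsupp p')
  have hdiag : ∑ j, π.real {(z j, z j)} < 3 / 4 :=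
    calc ∑ j, π.real {(z j, z j)}
        ≤ ∑ j, (min #{q | Φ (q, p) = j} #{q | Φ (q, p') = j} : ℝ) / Fintype.card Q := by
          refine sum_le_sum fun j _ => ?_
          rw [← Set.singleton_prod_singleton, ← min_div_div_right hN.le, ← hmass, ← hmass]
          exact measureReal_prod_le_min h₁ h₂ (measurableSet_singleton _)
            (measurableSet_singleton _)
      _ ≤ #{qq : Q × Q | Φ (qq.1, p) = Φ (qq.2, p')} / Fintype.card Q := by
          rw [← sum_div]
          gcongr
          exact_mod_cast sum_min_card_fiber_le_card _ _
      _ < 3 / 4 := by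
          rw [div_lt_div_iff₀ hN (by norm_num)]
          norm_cast
          omega
  calc 1 / (4 * k) ≤ 1 / k * (1 - ∑ j, π.real {(z j, z j)}) := by
        rw [one_div_mul_eq_div, div_le_div_iff₀ (by positivity) hk]
        nlinarith
    _ ≤ ∫ x, dist x.1 x.2 ∂π :=
        mul_one_sub_sum_diag_le_integral_dist (one_div_pos.mpr hk) hsep hπ

/-- Separation of empirical atoms: if the points `z^j` are pairwise `1/k`-distant
and for `p ≠ p'` the number of pairs `(q,q')` with `Φ(q,p) = Φ(q',p')` is less than
`(3/4)·#Q`, then the uniform measures `μ_p = (1/#Q) Σ_q δ_{z^{Φ(q,p)}}` satisfy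
`d_KW(μ_p, μ_{p'}) ≥ 1/(4k)`. -/
theorem separated_empirical_measures {X : Type*} [MetricSpace X] [MeasurableSpace X]
    [BorelSpace X] {J Q P : Type*} [Fintype J] [Fintype Q] [Fintype P]
    (k : ℝ) (hk : 0 < k) (z : J → X)
    (hsep : ∀ i j : J, i ≠ j → 1 / k ≤ dist (z i) (z j))
    (Φ : Q × P → J)
    (hΦ : ∀ p p' : P, p ≠ p' →
      4 * (Finset.univ.filter (fun qq' : Q × Q => Φ (qq'.1, p) = Φ (qq'.2, p'))).card
        < 3 * Fintype.card Q)
    (μ : P → Measure X)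
    (hμ : ∀ p, μ p = ((Fintype.card Q : ℝ≥0∞))⁻¹ • ∑ q : Q, Measure.dirac (z (Φ (q, p)))) :
    ∀ p p' : P, p ≠ p' → 1 / (4 * k) ≤ kwDist dist (μ p) (μ p') :=
  separated_empirical_measures_general k hk z hsep Φ hΦ μ hμ
end

section
/- The covering-number heuristic for maximal emergence: for the cube [0,1]^{d}, the minimal number N(ε) of ε-balls (in Kantorovich–Wasserstein distance) needed to cover the space of probability measures satisfies log log N(ε) ≥ −(d − δ) log ε for every δ > 0 and all small ε; equivalently, there exist at least exp(c ε^{−d'}) probability measures that are pairwise ε-separated, for any d' < d. -/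
open MeasureTheory ENNReal

/-!
Put `2m ≤ k^d` points `p (i, b)`, `i < m`, `b ∈ Bool`, on the `1/k`-grid of the cube, pairwise
at distance `≥ 1/k`. A binary word `w` of length `m` selects one point of each pair `p (i, ·)`;
let `μ_w` be the uniform measure on the selected points. A coupling of `μ_w` and `μ_v` has to
move the mass `hammingDist w v / m` sitting at the points chosen by `w` but not by `v`, over
distance `≥ 1/k`. A maximal binary code with minimal distance `m/4` (Gilbert–Varshamov) has at
least `e^{m/8}` words, since Hamming balls of radius `m/4` hold at most `(4/3)^m 3^{m/4}` words.
-/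

open Finset

section Kantorovich

variable {X : Type*} [PseudoMetricSpace X] [MeasurableSpace X] [BorelSpace X]
  [SecondCountableTopology X]

/-- The bounded set `K` makes the cost of every coupling integrable, so that no junk value `0`
of a Bochner integral enters the infimum defining `kwDist`. -/
theorem le_kwDist_of_separated {μ ν : Measure X} [IsProbabilityMeasure μ]
    [IsProbabilityMeasure ν] {K U T : Set X} (hK : Bornology.IsBounded K)
    (hμK : ∀ᵐ x ∂μ, x ∈ K) (hνK : ∀ᵐ y ∂ν, y ∈ K) (hνT : ∀ᵐ y ∂ν, y ∈ T)
    (hU : MeasurableSet U) {δ : ℝ} (hsep : ∀ x ∈ U, ∀ y ∈ T, δ ≤ dist x y) :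
    δ * μ.real U ≤ kwDist dist μ ν := by
  refine le_csInf ⟨_, μ.prod ν, by simp [Measure.map_fst_prod],
    by simp [Measure.map_snd_prod], rfl⟩ ?_
  rintro _ ⟨π, rfl, rfl, rfl⟩
  have : IsProbabilityMeasure π := by
    simpa [isProbabilityMeasure_iff, Measure.map_apply measurable_fst] using
      (inferInstance : IsProbabilityMeasure (π.map Prod.fst))
  have hK₁ := ae_of_ae_map measurable_fst.aemeasurable hμK
  have hK₂ := ae_of_ae_map measurable_snd.aemeasurable hνK
  have hT := ae_of_ae_map measurable_snd.aemeasurable hνT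
  obtain ⟨C, hC⟩ := Metric.isBounded_iff.mp hK
  have hint : Integrable (fun q : X × X => dist q.1 q.2) π :=
    .of_bound continuous_dist.aestronglyMeasurable C <| by
      filter_upwards [hK₁, hK₂] with q hq₁ hq₂
      simpa using hC hq₁ hq₂
  have hU₁ : MeasurableSet (Prod.fst ⁻¹' U : Set (X × X)) := measurable_fst hU
  calc δ * (π.map Prod.fst).real U
      = ∫ q, (Prod.fst ⁻¹' U).indicator (fun _ => δ) q ∂π := by
        rw [integral_indicator_const _ hU₁, map_measureReal_apply measurable_fst hU,
          smul_eq_mul, mul_comm]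
    _ ≤ ∫ q, dist q.1 q.2 ∂π := by
        refine integral_mono_ae ((integrable_const δ).indicator hU₁) hint ?_
        filter_upwards [hT] with q hq
        by_cases hq₁ : q.1 ∈ U
        · simpa [hq₁] using hsep _ hq₁ _ hq
        · simp [hq₁]

end Kantorovich

section WordMeasure

variable {ι X : Type*} [Fintype ι] [MeasurableSpace X]

noncomputable def wordMeasure (p : ι × Bool → X) (w : ι → Bool) : Measure X :=
  (Fintype.card ι : ℝ≥0∞)⁻¹ • ∑ i, Measure.dirac (p (i, w i))

variable (p : ι × Bool → X) (w : ι → Bool)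

open Classical in
theorem wordMeasure_apply [MeasurableSingletonClass X] (s : Set X) :
    wordMeasure p w s = #{i | p (i, w i) ∈ s} / Fintype.card ι := by
  rw [ENNReal.div_eq_inv_mul]
  simp [wordMeasure, Measure.coe_finsetSum, Measure.dirac_apply, Set.indicator_apply, sum_boole]

instance [Nonempty ι] : IsProbabilityMeasure (wordMeasure p w) := by
  constructor
  simp only [wordMeasure, Measure.smul_apply, Measure.coe_finsetSum, Finset.sum_apply, measure_univ,
    sum_const, card_univ, nsmul_eq_mul, mul_one, smul_eq_mul]
  exact ENNReal.inv_mul_cancel (by simp) (by simp)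

theorem ae_wordMeasure_mem_range [MeasurableSingletonClass X] :
    ∀ᵐ x ∂wordMeasure p w, x ∈ Set.range fun i => p (i, w i) := by
  simp [ae_iff, wordMeasure_apply]

theorem le_kwDist_wordMeasure [MetricSpace X] [BorelSpace X] [SecondCountableTopology X]
    [Nonempty ι] {δ : ℝ} (hδ : 0 ≤ δ) {p : ι × Bool → X}
    (hp : ∀ a b, a ≠ b → δ ≤ dist (p a) (p b)) (w v : ι → Bool) :
    δ * (hammingDist w v / Fintype.card ι) ≤
      kwDist dist (wordMeasure p w) (wordMeasure p v) := by
  set U := (fun i => p (i, w i)) '' {i | w i ≠ v i}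
  have hsep : ∀ x ∈ U, ∀ y ∈ Set.range fun j => p (j, v j), δ ≤ dist x y := by
    rintro _ ⟨i, hi, rfl⟩ _ ⟨j, rfl⟩
    refine hp _ _ fun h => hi ?_
    obtain ⟨rfl, h⟩ := Prod.mk.inj h
    exact h
  have hU : (hammingDist w v / Fintype.card ι : ℝ) ≤ (wordMeasure p w).real U := by
    rw [measureReal_def, wordMeasure_apply, ENNReal.toReal_div]
    simp only [ENNReal.toReal_natCast, hammingDist]
    gcongr
    exact fun hi => ⟨_, hi, rfl⟩
  have hrange (u : ι → Bool) : ∀ᵐ x ∂wordMeasure p u, x ∈ Set.range p :=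
    (ae_wordMeasure_mem_range p u).mono fun _ ⟨i, hi⟩ => ⟨_, hi⟩
  calc δ * (hammingDist w v / Fintype.card ι) ≤ δ * (wordMeasure p w).real U := by gcongr
    _ ≤ _ := le_kwDist_of_separated (Set.finite_range p).isBounded (hrange w) (hrange v)
          (ae_wordMeasure_mem_range p v) ((Set.toFinite _).image _).measurableSet hsep

end WordMeasure

section Codes

/-- A maximal `r`-independent set is `r`-dominating. -/
theorem exists_pairwise_not_rel_card_le_mul {α : Type*} [Fintype α] (r : α → α → Prop)
    [DecidableRel r] [Std.Refl r] [Std.Symm r] (V : ℕ) (hV : ∀ a, #{b | r a b} ≤ V) :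
    ∃ C : Finset α, (C : Set α).Pairwise (fun a b => ¬ r a b) ∧ Fintype.card α ≤ #C * V := by
  classical
  obtain ⟨C, hC, hmax⟩ :=
    exists_max_image {C : Finset α | (C : Set α).Pairwise fun a b => ¬ r a b} card ⟨∅, by simp⟩
  rw [mem_filter] at hC
  have hcover : C.biUnion (fun c => {b | r c b}) = univ := by
    refine eq_univ_of_forall fun x => mem_biUnion.mpr ?_
    by_contra! hx
    have hxC : x ∉ C := fun h => by simpa [refl_of r x] using hx x h
    have := hmax (insert x C) <| mem_filter.mpr ⟨mem_univ _, by
      rw [coe_insert, Set.pairwise_insert_of_notMem hxC]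
      refine ⟨hC.2, fun c hc => ⟨fun h => ?_, fun h => ?_⟩⟩ <;>
        simpa [h, symm_of r h] using hx c hc⟩
    rw [card_insert_of_notMem hxC] at this
    omega
  refine ⟨C, hC.2, ?_⟩
  calc Fintype.card α = #(C.biUnion fun c => {b | r c b}) := by rw [hcover, card_univ]
    _ ≤ ∑ c ∈ C, #{b | r c b} := card_biUnion_le
    _ ≤ #C * V := sum_le_card_nsmul _ _ _ fun c _ => hV c

variable {ι : Type*} [Fintype ι] [DecidableEq ι]

theorem card_filter_hammingDist_le (w : ι → Bool) (r : ℕ) :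
    #{v | hammingDist w v ≤ r} ≤ ∑ i ∈ range (r + 1), (Fintype.card ι).choose i := by
  calc #{v | hammingDist w v ≤ r}
      ≤ #((range (r + 1)).biUnion fun i => powersetCard i univ) := by
        refine card_le_card_of_injOn (fun v => ({i | w i ≠ v i} : Finset ι))
          (fun v hv => ?_) fun v _ v' _ h => ?_
        · simp only [coe_filter, mem_univ, true_and, Set.mem_ofPred_eq] at hv
          simp only [coe_biUnion, coe_range, Set.mem_Iio, Set.mem_iUnion, mem_coe,
            mem_powersetCard, subset_univ, true_and]
          exact ⟨_, Nat.lt_succ_of_le hv, rfl⟩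
        · funext i
          have := congrArg (i ∈ ·) h
          simp only [mem_filter, mem_univ, true_and] at this
          revert this
          cases w i <;> cases v i <;> cases v' i <;> simp
    _ ≤ ∑ i ∈ range (r + 1), #(powersetCard i (univ : Finset ι)) := card_biUnion_le
    _ = ∑ i ∈ range (r + 1), (Fintype.card ι).choose i := by simp [card_powersetCard]

theorem sum_range_choose_mul_pow_le {a m r : ℕ} (ha : 1 ≤ a) (hr : r ≤ m) :
    (∑ i ∈ range (r + 1), m.choose i) * a ^ (m - r) ≤ (a + 1) ^ m := by
  rw [sum_mul, add_comm a 1, add_pow]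
  simp only [one_pow, one_mul, Nat.cast_id]
  calc ∑ i ∈ range (r + 1), m.choose i * a ^ (m - r)
      ≤ ∑ i ∈ range (r + 1), a ^ (m - i) * m.choose i := by
        refine sum_le_sum fun i hi => ?_
        rw [mul_comm]
        gcongr
        exact Nat.lt_succ_iff.mp (mem_range.mp hi)
    _ ≤ ∑ i ∈ range (m + 1), a ^ (m - i) * m.choose i :=
        sum_le_sum_of_subset (range_subset_range.mpr (by omega))

theorem exp_div_eight_le {m r N : ℕ} (hr : 4 * r ≤ m) (h : 2 ^ m * 3 ^ (m - r) ≤ N * 4 ^ m) :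
    Real.exp (m / 8) ≤ N := by
  have hnat : 27 ^ m ≤ 16 ^ m * N ^ 4 := by
    refine Nat.le_of_mul_le_mul_left ?_ (pow_pos (by norm_num : 0 < 16) m)
    calc 16 ^ m * 27 ^ m = 16 ^ m * 3 ^ (3 * m) := by rw [pow_mul]; norm_num
      _ ≤ 16 ^ m * 3 ^ (4 * (m - r)) := by
        gcongr 16 ^ m * ?_
        exact pow_le_pow_right₀ (by norm_num) (by omega)
      _ = (2 ^ m * 3 ^ (m - r)) ^ 4 := by
        rw [mul_pow, ← pow_mul, ← pow_mul, mul_comm m 4, mul_comm (m - r) 4, pow_mul 2 4 m]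
        norm_num
      _ ≤ (N * 4 ^ m) ^ 4 := by gcongr
      _ = 16 ^ m * (16 ^ m * N ^ 4) := by
        rw [mul_pow, ← pow_mul, mul_comm m 4, pow_mul, ← mul_assoc, ← mul_pow]
        norm_num
        ring
  have he : Real.exp (1 / 2) ≤ 27 / 16 := by
    refine (pow_le_pow_iff_left₀ (Real.exp_pos _).le (by norm_num) two_ne_zero).mp ?_
    rw [← Real.exp_nat_mul]
    norm_num
    linarith [Real.exp_one_lt_d9]
  refine (pow_le_pow_iff_left₀ (Real.exp_pos _).le N.cast_nonneg four_ne_zero).mp ?_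
  calc Real.exp (m / 8) ^ 4 = Real.exp (1 / 2) ^ m := by
        rw [← Real.exp_nat_mul, ← Real.exp_nat_mul]; ring_nf
    _ ≤ (27 / 16) ^ m := by gcongr
    _ ≤ (N : ℝ) ^ 4 := by
        rw [div_pow, div_le_iff₀ (by positivity), mul_comm]
        exact_mod_cast hnat

variable (ι) in
theorem exists_large_binary_code :
    ∃ C : Finset (ι → Bool),
      (C : Set (ι → Bool)).Pairwise (fun w v => Fintype.card ι ≤ 4 * hammingDist w v) ∧
      Real.exp (Fintype.card ι / 8) ≤ #C := by
  set m := Fintype.card ι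
  set r := (m - 1) / 4
  have : Std.Refl fun w v : ι → Bool => hammingDist w v ≤ r := ⟨fun w => by simp⟩
  have : Std.Symm fun w v : ι → Bool => hammingDist w v ≤ r :=
    ⟨fun w v h => hammingDist_comm w v ▸ h⟩
  obtain ⟨C, hC, hcard⟩ := exists_pairwise_not_rel_card_le_mul
    (fun w v : ι → Bool => hammingDist w v ≤ r) _ (fun w => card_filter_hammingDist_le w r)
  refine ⟨C, hC.mono' fun w v h => by omega, exp_div_eight_le (r := r) (by omega) ?_⟩
  calc 2 ^ m * 3 ^ (m - r) = Fintype.card (ι → Bool) * 3 ^ (m - r) := by simp [m]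
    _ ≤ #C * (∑ i ∈ range (r + 1), m.choose i) * 3 ^ (m - r) := by gcongr
    _ ≤ #C * 4 ^ m := by
        rw [mul_assoc]
        gcongr
        exact sum_range_choose_mul_pow_le (by norm_num) (by omega)

end Codes

theorem exists_separated_points_in_cube {α : Type*} [Fintype α] {d k : ℕ} (hk : 0 < k)
    (hα : Fintype.card α ≤ k ^ d) :
    ∃ p : α → Fin d → ℝ, (∀ a j, p a j ∈ Set.Icc (0 : ℝ) 1) ∧
      ∀ a b, a ≠ b → 1 / (k : ℝ) ≤ dist (p a) (p b) := by
  obtain ⟨e⟩ := Function.Embedding.nonempty_of_card_le (β := Fin d → Fin k) (by simpa using hα)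
  have hk' : (0 : ℝ) < k := by exact_mod_cast hk
  refine ⟨fun a j => (e a j : ℝ) / k, fun a j => ⟨by positivity, ?_⟩, fun a b hab => ?_⟩
  · rw [div_le_one hk']
    exact_mod_cast (e a j).isLt.le
  · obtain ⟨j, hj⟩ := Function.ne_iff.mp (e.injective.ne hab)
    have hne : ((e a j : ℕ) : ℤ) ≠ (e b j : ℕ) := by exact_mod_cast Fin.val_ne_of_ne hj
    have h1 : (1 : ℝ) ≤ |(e a j : ℝ) - e b j| := by
      exact_mod_cast Int.one_le_abs (sub_ne_zero.mpr hne)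
    calc 1 / (k : ℝ) ≤ |(e a j : ℝ) - e b j| / k := by gcongr
      _ = dist ((e a j : ℝ) / k) ((e b j : ℝ) / k) := by
        rw [Real.dist_eq, ← sub_div, abs_div, abs_of_pos hk']
      _ ≤ _ := dist_le_pi_dist (fun j => (e a j : ℝ) / k) (fun j => (e b j : ℝ) / k) j

/-- Covering-number heuristic for maximal emergence: in the cube `[0,1]^d` with the
sup metric, there are at least `exp(c k^d)` probability measures supported in the
cube which are pairwise at Kantorovich–Wasserstein distance at least `1/(4k)`. -/
theorem separated_measures_in_cube (d : ℕ) (hd : 1 ≤ d) :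
    ∃ c : ℝ, 0 < c ∧ ∃ k₀ : ℕ, ∀ k : ℕ, k₀ ≤ k →
      ∃ N : ℕ, Real.exp (c * (k : ℝ) ^ d) ≤ (N : ℝ) ∧
      ∃ μ : Fin N → Measure (Fin d → ℝ),
        (∀ i, IsProbabilityMeasure (μ i) ∧
          μ i {x : Fin d → ℝ | ∀ j, x j ∈ Set.Icc (0:ℝ) 1}ᶜ = 0) ∧
        (∀ i j, i ≠ j → 1 / (4 * (k : ℝ)) ≤ kwDist dist (μ i) (μ j)) := by
  refine ⟨1 / 20, by norm_num, 5, fun k hk => ?_⟩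
  set m := k ^ d / 2
  have hkd : k ≤ k ^ d := Nat.le_self_pow (by omega) k
  have : Nonempty (Fin m) := ⟨⟨0, by omega⟩⟩
  obtain ⟨p, hp_cube, hp_sep⟩ :=
    exists_separated_points_in_cube (α := Fin m × Bool) (d := d) (k := k) (by omega)
      (by simp only [Fintype.card_prod, Fintype.card_fin, Fintype.card_bool]; omega)
  obtain ⟨C, hC_sep, hC_card⟩ := exists_large_binary_code (Fin m)
  set word : Fin #C → Fin m → Bool := fun i => C.equivFin.symm i
  refine ⟨#C, ?_, fun i => wordMeasure p (word i), fun i => ⟨inferInstance, ?_⟩,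
    fun i j hij => ?_⟩
  · have hm : (2 * k ^ d : ℝ) ≤ 5 * m := by exact_mod_cast (by omega : 2 * k ^ d ≤ 5 * m)
    calc Real.exp (1 / 20 * (k : ℝ) ^ d) ≤ Real.exp (m / 8) := by gcongr; linarith
      _ ≤ #C := by simpa using hC_card
  · exact ae_iff.mp ((ae_wordMeasure_mem_range p _).mono fun _ ⟨a, ha⟩ => ha ▸ hp_cube _)
  · have hdist : m ≤ 4 * hammingDist (word i) (word j) := by
      simpa using hC_sep (C.equivFin.symm i).2 (C.equivFin.symm j).2
        (Subtype.coe_injective.ne (C.equivFin.symm.injective.ne hij))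
    calc 1 / (4 * (k : ℝ)) = 1 / k * (1 / 4) := by ring
      _ ≤ 1 / k * (hammingDist (word i) (word j) / Fintype.card (Fin m)) := by
        gcongr 1 / (k : ℝ) * ?_
        have hm : (0 : ℝ) < m := by exact_mod_cast (by omega : 0 < m)
        have hdist' : (m : ℝ) ≤ 4 * hammingDist (word i) (word j) := by exact_mod_cast hdist
        rw [Fintype.card_fin, le_div_iff₀ hm]
        linarith
      _ ≤ _ := le_kwDist_wordMeasure (by positivity) hp_sep _ _
end
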